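/- Let P be a probability distribution on X × A × B with |A| = |B| = 2 and |X| = d > 2. Then the no-signaling simultaneous guessing probability is at most min{ 2·p_c, p_c + 1/8 }, where p_c is the classical simultaneous guessing probability. -/

import Mathlib

/-!
A no-signalling box has well-defined marginals `pA a` and `pB b`, and it answers `x` on both sides
with probability at most `min (pA a x) (pB b x)`; it remains to bound this overlap by classical
strategies. Bounding the minimum by `pB b x`, each of the two questions of Bob contributes at most
the value of a constant strategy, whence `2 p_c`. For `p_c + 1/8`, the four marginals
`pA 0, pB 0, pA 1, pB 1` form a cycle. Dropping one edge, maximal couplings along the remaining path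
glue to a joint law of the answer table `(f 0, g 0, f 1, g 1)`: a randomized classical strategy
that wins with probability at least the minimum on the three path edges and, by Fréchet's bound,
at least the minimum minus `1/2` on the dropped edge. Averaging over the four choices of the
dropped edge costs at most `1/8`.
-/

open Finset

section Coupling

variable {α β γ δ : Type*} [Fintype α] [Fintype β] [Fintype γ] [Fintype δ]

structure IsCoupling (M : α → β → ℝ) (p : α → ℝ) (q : β → ℝ) : Prop where
  nonneg : ∀ a b, 0 ≤ M a b
  left_marginal : ∀ a, ∑ b, M a b = p a
  right_marginal : ∀ b, ∑ a, M a b = q b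

namespace IsCoupling

variable {M : α → β → ℝ} {p : α → ℝ} {q : β → ℝ}

lemma le_right (h : IsCoupling M p q) (a : α) (b : β) : M a b ≤ q b :=
  h.right_marginal b ▸ single_le_sum (fun a _ => h.nonneg a b) (mem_univ a)

/-- Fréchet's lower bound on the diagonal of a coupling. -/
lemma add_sub_one_le_apply_self [DecidableEq α] {M : α → α → ℝ} {p q : α → ℝ}
    (h : IsCoupling M p q) (hq : ∑ y, q y = 1) (x : α) : p x + q x - 1 ≤ M x x := by
  have hoff : ∑ y ∈ univ.erase x, M x y ≤ ∑ y ∈ univ.erase x, q y :=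
    sum_le_sum fun y _ => h.le_right x y
  rw [sum_erase_eq_sub (mem_univ x), sum_erase_eq_sub (mem_univ x), h.left_marginal, hq] at hoff
  linarith

/-- The gluing lemma, via the Markov chain `M a b * N b c / q b`. -/
lemma exists_glue {N : β → γ → ℝ} {r : γ → ℝ} (hM : IsCoupling M p q) (hN : IsCoupling N q r) :
    ∃ ν : α → β → γ → ℝ, (∀ a b c, 0 ≤ ν a b c) ∧ (∀ a b, ∑ c, ν a b c = M a b) ∧
      ∀ b c, ∑ a, ν a b c = N b c := by
  refine ⟨fun a b c => M a b * N b c / q b, fun a b c => ?_, fun a b => ?_, fun b c => ?_⟩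
  · have := hM.nonneg a b; have := hN.nonneg b c
    have : 0 ≤ q b := hN.left_marginal b ▸ sum_nonneg fun c _ => hN.nonneg b c
    positivity
  · rw [← sum_div, ← mul_sum, hN.left_marginal]
    refine mul_div_cancel_of_imp fun hq => ?_
    rw [← hM.right_marginal] at hq
    exact (sum_eq_zero_iff_of_nonneg fun a _ => hM.nonneg a b).1 hq a (mem_univ a)
  · rw [← sum_div, ← sum_mul, hM.right_marginal]
    refine mul_div_cancel_left_of_imp fun hq => ?_
    rw [← hN.left_marginal] at hq
    exact (sum_eq_zero_iff_of_nonneg fun c _ => hN.nonneg b c).1 hq c (mem_univ c)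

lemma exists_chain {p : α → ℝ} {q : β → ℝ} {r : γ → ℝ} {s : δ → ℝ} {M : α → β → ℝ}
    {N : β → γ → ℝ} {L : γ → δ → ℝ} (hM : IsCoupling M p q) (hN : IsCoupling N q r)
    (hL : IsCoupling L r s) :
    ∃ μ : α → β → γ → δ → ℝ, (∀ a b c d, 0 ≤ μ a b c d) ∧
      (∀ a b, ∑ c, ∑ d, μ a b c d = M a b) ∧ (∀ b c, ∑ a, ∑ d, μ a b c d = N b c) ∧
      (∀ c d, ∑ a, ∑ b, μ a b c d = L c d) ∧ IsCoupling (fun a d => ∑ b, ∑ c, μ a b c d) p s := by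
  obtain ⟨ν, hν0, hνM, hνN⟩ := hM.exists_glue hN
  have hν : IsCoupling (fun (ab : α × β) c => ν ab.1 ab.2 c) (fun ab => M ab.1 ab.2) r :=
    ⟨fun ab c => hν0 _ _ c, fun ab => hνM _ _, fun c => by
      rw [Fintype.sum_prod_type, sum_comm]; simp only [hνN, hN.right_marginal]⟩
  obtain ⟨ρ, hρ0, hρν, hρL⟩ := hν.exists_glue hL
  refine ⟨fun a b c d => ρ (a, b) c d, fun a b c d => hρ0 _ c d, fun a b => ?_, fun b c => ?_,
    fun c d => ?_, ⟨fun a d => ?_, fun a => ?_, fun d => ?_⟩⟩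
  · simp only [hρν, hνM]
  · simp only [hρν, hνN]
  · rw [← hρL, Fintype.sum_prod_type]
  · exact sum_nonneg fun b _ => sum_nonneg fun c _ => hρ0 _ c d
  · rw [sum_comm]
    simp only [sum_comm (γ := δ), hρν, hνM, hM.left_marginal]
  · rw [← hL.right_marginal d]
    simp only [← hρL]
    exact (Fintype.sum_prod_type fun ab : α × β => ∑ c, ρ ab c d).symm.trans sum_comm

end IsCoupling

/-- The maximal coupling: the common mass `min p q` on the diagonal, plus the normalized product of
the two residual masses. -/
lemma exists_isCoupling_min_le_apply_self [DecidableEq α] {p q : α → ℝ}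
    (hp : p ∈ stdSimplex ℝ α) (hq : q ∈ stdSimplex ℝ α) :
    ∃ M, IsCoupling M p q ∧ ∀ x, min (p x) (q x) ≤ M x x := by
  set m : α → ℝ := fun x => min (p x) (q x)
  set R : ℝ := 1 - ∑ x, m x
  have hr : ∀ x, 0 ≤ p x - m x := fun x => sub_nonneg.2 (min_le_left _ _)
  have hs : ∀ x, 0 ≤ q x - m x := fun x => sub_nonneg.2 (min_le_right _ _)
  have hrR : ∑ x, (p x - m x) = R := by rw [sum_sub_distrib, hp.2]
  have hsR : ∑ x, (q x - m x) = R := by rw [sum_sub_distrib, hq.2]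
  have hR : 0 ≤ R := hrR ▸ sum_nonneg fun x _ => hr x
  -- if `R = 0` the residual masses vanish, so the junk value of `/ R` is harmless
  have hrz : ∀ x, R = 0 → p x - m x = 0 := fun x h0 =>
    (sum_eq_zero_iff_of_nonneg fun x _ => hr x).1 (hrR.trans h0) x (mem_univ x)
  have hsz : ∀ x, R = 0 → q x - m x = 0 := fun x h0 =>
    (sum_eq_zero_iff_of_nonneg fun x _ => hs x).1 (hsR.trans h0) x (mem_univ x)
  refine ⟨fun x y => (if x = y then m x else 0) + (p x - m x) * (q y - m y) / R,
    ⟨fun x y => ?_, fun x => ?_, fun y => ?_⟩, fun x => ?_⟩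
  · have := hr x; have := hs y; have : 0 ≤ m x := le_min (hp.1 x) (hq.1 x)
    split_ifs <;> positivity
  · rw [sum_add_distrib, sum_ite_eq, if_pos (mem_univ x), ← sum_div, ← mul_sum, hsR,
      mul_div_cancel_of_imp (hrz x)]
    ring
  · rw [sum_add_distrib, sum_ite_eq', if_pos (mem_univ y), ← sum_div, ← sum_mul, hrR,
      mul_div_cancel_left_of_imp (hsz y)]
    ring
  · have := hr x; have := hs x
    show m x ≤ (if x = x then m x else 0) + _
    rw [if_pos rfl]
    exact le_add_of_nonneg_right (by positivity)

end Coupling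

section Guessing

variable {X I J : Type*} [Fintype X] [DecidableEq X] [Fintype I] [Fintype J]

def guessValue (P : X → I → J → ℝ) (f : I → X) (g : J → X) : ℝ :=
  ∑ x, ∑ a, ∑ b, P x a b * if f a = x ∧ g b = x then 1 else 0

def overlapValue (P : X → I → J → ℝ) (pA : I → X → ℝ) (pB : J → X → ℝ) : ℝ :=
  ∑ x, ∑ a, ∑ b, P x a b * min (pA a x) (pB b x)

lemma guessValue_const (P : X → I → J → ℝ) (x : X) :
    guessValue P (fun _ => x) (fun _ => x) = ∑ a, ∑ b, P x a b := by
  simp [guessValue]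

lemma mixture_value_le_of_guessValue_le {ι : Type*} [Fintype ι] {P : X → I → J → ℝ} {c : ℝ}
    (hc : ∀ f g, guessValue P f g ≤ c) {μ : ι → ℝ} (hμ : μ ∈ stdSimplex ℝ ι)
    (f : ι → I → X) (g : ι → J → X) :
    ∑ x, ∑ a, ∑ b, P x a b * ∑ i, μ i * (if f i a = x ∧ g i b = x then 1 else 0) ≤ c :=
  calc _ = ∑ i, μ i * guessValue P (f i) (g i) := by
        simp only [guessValue, mul_sum, sum_comm (s := (univ : Finset ι)), mul_left_comm]
    _ ≤ ∑ i, μ i * c := sum_le_sum fun i _ => mul_le_mul_of_nonneg_left (hc _ _) (hμ.1 i)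
    _ = c := by rw [← sum_mul, hμ.2, one_mul]

lemma overlapValue_le_card_mul {P : X → I → J → ℝ} {pA : I → X → ℝ} {pB : J → X → ℝ} {c : ℝ}
    (hP0 : ∀ x a b, 0 ≤ P x a b) (hB : ∀ b, pB b ∈ stdSimplex ℝ X)
    (hc : ∀ x, guessValue P (fun _ => x) (fun _ => x) ≤ c) :
    overlapValue P pA pB ≤ Fintype.card J * c := by
  have hcol : ∀ x b, ∑ a, P x a b ≤ c := fun x b =>
    calc ∑ a, P x a b ≤ ∑ a, ∑ b', P x a b' :=
          sum_le_sum fun a _ => single_le_sum (fun b' _ => hP0 x a b') (mem_univ b)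
      _ ≤ c := guessValue_const P x ▸ hc x
  calc overlapValue P pA pB ≤ ∑ x, ∑ a, ∑ b, P x a b * pB b x :=
        sum_le_sum fun x _ => sum_le_sum fun a _ => sum_le_sum fun b _ =>
          mul_le_mul_of_nonneg_left (min_le_right _ _) (hP0 x a b)
    _ = ∑ b, ∑ x, (∑ a, P x a b) * pB b x := by
        simp only [sum_mul, sum_comm (s := (univ : Finset J))]
    _ ≤ ∑ b, ∑ x, c * pB b x :=
        sum_le_sum fun b _ => sum_le_sum fun x _ =>
          mul_le_mul_of_nonneg_right (hcol x b) ((hB b).1 x)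
    _ = Fintype.card J * c := by simp [← mul_sum, (hB _).2]

lemma Fin.eq_or_eq_rev_of_two (a a₀ : Fin 2) : a = a₀ ∨ a = a₀.rev := by
  decide +revert

lemma Fin.rev_ne_self_of_two (a : Fin 2) : a.rev ≠ a := by
  decide +revert

lemma overlapValue_sub_half_le {P : X → Fin 2 → Fin 2 → ℝ} {pA pB : Fin 2 → X → ℝ} {c : ℝ}
    (hP0 : ∀ x a b, 0 ≤ P x a b) (hA : ∀ a, pA a ∈ stdSimplex ℝ X)
    (hB : ∀ b, pB b ∈ stdSimplex ℝ X) (hc : ∀ f g, guessValue P f g ≤ c) (a₀ b₀ : Fin 2) :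
    overlapValue P pA pB - (∑ x, P x a₀ b₀) / 2 ≤ c := by
  -- Couple the marginals maximally along the path `pA a₀ - pB b₀.rev - pA a₀.rev - pB b₀`, which
  -- avoids the edge `(a₀, b₀)`, and draw the answers `f a₀, g b₀.rev, f a₀.rev, g b₀` jointly.
  obtain ⟨M₁, hM₁, hM₁x⟩ := exists_isCoupling_min_le_apply_self (hA a₀) (hB b₀.rev)
  obtain ⟨M₂, hM₂, hM₂x⟩ := exists_isCoupling_min_le_apply_self (hB b₀.rev) (hA a₀.rev)
  obtain ⟨M₃, hM₃, hM₃x⟩ := exists_isCoupling_min_le_apply_self (hA a₀.rev) (hB b₀)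
  obtain ⟨μ, hμ0, hμ₁, hμ₂, hμ₃, hμ₄⟩ := hM₁.exists_chain hM₂ hM₃
  set ν : X × X × X × X → ℝ := fun y => μ y.1 y.2.1 y.2.2.1 y.2.2.2
  have hν : ν ∈ stdSimplex ℝ _ := ⟨fun y => hμ0 _ _ _ _, by
    simp only [ν, Fintype.sum_prod_type, hμ₁, hM₁.left_marginal, (hA a₀).2]⟩
  refine le_trans ?_ (mixture_value_le_of_guessValue_le hc hν
    (fun y a => if a = a₀ then y.1 else y.2.2.1) (fun y b => if b = b₀ then y.2.2.2 else y.2.1))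
  have hsplit : overlapValue P pA pB - (∑ x, P x a₀ b₀) / 2 = ∑ x, ∑ a, ∑ b,
      P x a b * (min (pA a x) (pB b x) - if a = a₀ ∧ b = b₀ then 1 / 2 else 0) := by
    simp only [overlapValue, mul_sub, sum_sub_distrib, mul_ite, mul_zero, ite_and, sum_ite_irrel,
      sum_const_zero, sum_ite_eq', mem_univ, if_true, sum_div, mul_one_div]
  rw [hsplit]
  refine sum_le_sum fun x _ => sum_le_sum fun a _ => sum_le_sum fun b _ =>
    mul_le_mul_of_nonneg_left ?_ (hP0 x a b)
  obtain rfl | rfl := Fin.eq_or_eq_rev_of_two a a₀ <;>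
    obtain rfl | rfl := Fin.eq_or_eq_rev_of_two b b₀ <;>
    simp only [ν, Fintype.sum_prod_type, if_pos, if_neg (Fin.rev_ne_self_of_two _), mul_ite,
      mul_one, mul_zero, ite_and, sum_ite_irrel, sum_const_zero, sum_ite_eq', mem_univ, and_true,
      true_and, sub_zero]
  · have hfrechet : pA a x + pB b x - 1 ≤ ∑ y₂, ∑ y₃, μ x y₂ y₃ x :=
      hμ₄.add_sub_one_le_apply_self (hB b).2 x
    have : 0 ≤ ∑ y₂, ∑ y₃, μ x y₂ y₃ x := sum_nonneg fun _ _ => sum_nonneg fun _ _ => hμ0 _ _ _ _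
    rcases le_total (min (pA a x) (pB b x)) (1 / 2) with h | h
    · linarith
    · linarith [min_le_left (pA a x) (pB b x), min_le_right (pA a x) (pB b x)]
  · exact (hμ₁ x x).symm ▸ hM₁x x
  · exact (hμ₃ x x).symm ▸ hM₃x x
  · exact min_comm (pA _ x) (pB _ x) ▸ (hμ₂ x x).symm ▸ hM₂x x

lemma overlapValue_le_add_one_div_eight {P : X → Fin 2 → Fin 2 → ℝ} {pA pB : Fin 2 → X → ℝ}
    {c : ℝ} (hP0 : ∀ x a b, 0 ≤ P x a b) (hP1 : ∑ x, ∑ a, ∑ b, P x a b = 1)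
    (hA : ∀ a, pA a ∈ stdSimplex ℝ X) (hB : ∀ b, pB b ∈ stdSimplex ℝ X)
    (hc : ∀ f g, guessValue P f g ≤ c) :
    overlapValue P pA pB ≤ c + 1 / 8 := by
  have h := sum_le_sum fun a₀ (_ : a₀ ∈ univ) => sum_le_sum fun b₀ (_ : b₀ ∈ univ) =>
    overlapValue_sub_half_le hP0 hA hB hc a₀ b₀
  simp only [Fin.sum_univ_two, sum_add_distrib] at h hP1
  linarith

end Guessing

theorem ns_le_classical_bound_general (d : ℕ)
    (P : Fin d → Fin 2 → Fin 2 → ℝ)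
    (hP0 : ∀ x a b, 0 ≤ P x a b)
    (hP1 : ∑ x, ∑ a, ∑ b, P x a b = 1)
    (pc : ℝ)
    (hpc : IsGreatest {p : ℝ | ∃ f g : Fin 2 → Fin d,
        p = ∑ x, ∑ a, ∑ b, P x a b * (if f a = x ∧ g b = x then 1 else 0)} pc)
    (Q : Fin d → Fin d → Fin 2 → Fin 2 → ℝ)
    (hQ0 : ∀ xA xB a b, 0 ≤ Q xA xB a b)
    (hQ1 : ∀ a b, ∑ xA, ∑ xB, Q xA xB a b = 1)
    (hQnsA : ∀ xB a a' b, ∑ xA, Q xA xB a b = ∑ xA, Q xA xB a' b)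
    (hQnsB : ∀ xA a b b', ∑ xB, Q xA xB a b = ∑ xB, Q xA xB a b') :
    (∑ x, ∑ a, ∑ b, P x a b * Q x x a b) ≤ min (2 * pc) (pc + 1/8) := by
  set pA : Fin 2 → Fin d → ℝ := fun a x => ∑ y, Q x y a 0
  set pB : Fin 2 → Fin d → ℝ := fun b x => ∑ y, Q y x 0 b
  have hA : ∀ a, pA a ∈ stdSimplex ℝ (Fin d) :=
    fun a => ⟨fun x => sum_nonneg fun y _ => hQ0 x y a 0, hQ1 a 0⟩
  have hB : ∀ b, pB b ∈ stdSimplex ℝ (Fin d) :=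
    fun b => ⟨fun x => sum_nonneg fun y _ => hQ0 y x 0 b, sum_comm.trans (hQ1 0 b)⟩
  have hQ : ∀ x a b, Q x x a b ≤ min (pA a x) (pB b x) := fun x a b =>
    le_min ((single_le_sum (fun y _ => hQ0 x y a b) (mem_univ x)).trans_eq (hQnsB x a b 0))
      ((single_le_sum (fun y _ => hQ0 y x a b) (mem_univ x)).trans_eq (hQnsA x a 0 b))
  have hc : ∀ f g, guessValue P f g ≤ pc := fun f g => hpc.2 ⟨f, g, rfl⟩
  have hω : ∑ x, ∑ a, ∑ b, P x a b * Q x x a b ≤ overlapValue P pA pB :=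
    sum_le_sum fun x _ => sum_le_sum fun a _ => sum_le_sum fun b _ =>
      mul_le_mul_of_nonneg_left (hQ x a b) (hP0 x a b)
  refine le_min (hω.trans ?_) (hω.trans (overlapValue_le_add_one_div_eight hP0 hP1 hA hB hc))
  simpa using overlapValue_le_card_mul hP0 hB fun x => hc _ _

/-- For a distribution on [d] × {0,1} × {0,1} with d > 2, the winning probability
of any no-signaling strategy is at most min{2·p_c, p_c + 1/8}, where p_c is the
optimal classical simultaneous guessing probability. -/
theorem ns_le_classical_bound (d : ℕ) (hd : 2 < d)
    (P : Fin d → Fin 2 → Fin 2 → ℝ)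
    (hP0 : ∀ x a b, 0 ≤ P x a b)
    (hP1 : ∑ x, ∑ a, ∑ b, P x a b = 1)
    (pc : ℝ)
    (hpc : IsGreatest {p : ℝ | ∃ f g : Fin 2 → Fin d,
        p = ∑ x, ∑ a, ∑ b, P x a b * (if f a = x ∧ g b = x then 1 else 0)} pc)
    (Q : Fin d → Fin d → Fin 2 → Fin 2 → ℝ)
    (hQ0 : ∀ xA xB a b, 0 ≤ Q xA xB a b)
    (hQ1 : ∀ a b, ∑ xA, ∑ xB, Q xA xB a b = 1)
    (hQnsA : ∀ xB a a' b, ∑ xA, Q xA xB a b = ∑ xA, Q xA xB a' b)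
    (hQnsB : ∀ xA a b b', ∑ xB, Q xA xB a b = ∑ xB, Q xA xB a b') :
    (∑ x, ∑ a, ∑ b, P x a b * Q x x a b) ≤ min (2 * pc) (pc + 1/8) :=
  ns_le_classical_bound_general d P hP0 hP1 pc hpc Q hQ0 hQ1 hQnsA hQnsB
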